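/- Let M be an n×m (0,1)-matrix of rank m whose unique solution λ of Mλ = 𝟙 has all coordinates nonzero. Then the number of subsets I ⊆ [m] such that z_I(M) has rank m and its solution has all coordinates nonzero equals 2^m − |U(λ)|, where U(λ) = {u ∈ {0,1}^m : u·λ = 1}. -/

import Mathlib

/-- `z_I(M)`: the matrix obtained from `M` by complementing (replacing `a` by `𝟙 − a`)
each column indexed by `I`. -/
def zI {n m : ℕ} (M : Matrix (Fin n) (Fin m) ℝ) (I : Finset (Fin m)) :
    Matrix (Fin n) (Fin m) ℝ :=
  fun i j => if j ∈ I then 1 - M i j else M i j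

/-- The unificators of `λ ∈ ℝ^m`, viewed as subsets `S ⊆ [m]` with `∑_{i∈S} λ_i = 1`. -/
def unifSets (m : ℕ) (l : Fin m → ℝ) : Set (Finset (Fin m)) :=
  {S | ∑ i ∈ S, l i = 1}

/-! With `σ = signFlip I` the `±1` vector that is `-1` exactly on `I`, complementing the columns
in `I` gives `z_I(M) v = M (σ v) + (∑_{j ∈ I} v_j) 𝟙`; with `Mλ = 𝟙` this yields
`z_I(M) (σ λ) = (1 - ∑_{j ∈ I} λ_j) 𝟙`. If `∑_{j ∈ I} λ_j = 1`, then `σ λ` is a nonzero kernel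
vector, so `z_I(M)` loses rank. Otherwise `σ λ / (1 - ∑_{j ∈ I} λ_j)` is a solution with no zero
coordinate, and `z_I(M)` is injective: `z_I(M) v = 0` forces `σ v = -t λ` with `t = ∑_{j ∈ I} v_j`,
whence `t = t ∑_{j ∈ I} λ_j`, so `t = 0` and `v = 0`. -/

open Matrix Function

theorem Matrix.rank_eq_card_iff_mulVec_injective {K ι κ : Type*} [Field K] [Fintype κ]
    (A : Matrix ι κ K) : A.rank = Fintype.card κ ↔ Injective A.mulVec := by
  have h := LinearMap.finrank_range_add_finrank_ker A.mulVecLin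
  rw [Module.finrank_fintype_fun_eq_card] at h
  rw [← coe_mulVecLin, ← LinearMap.ker_eq_bot, ← Submodule.finrank_eq_zero, rank]
  omega

def signFlip {m : ℕ} (I : Finset (Fin m)) : Fin m → ℝ := fun j => if j ∈ I then -1 else 1

section
variable {n m : ℕ} (M : Matrix (Fin n) (Fin m) ℝ) (I : Finset (Fin m))

theorem signFlip_mul_self : signFlip I * signFlip I = 1 := by
  ext j; by_cases hj : j ∈ I <;> simp [signFlip, hj]

theorem sum_signFlip_mul (v : Fin m → ℝ) : ∑ j ∈ I, (signFlip I * v) j = -∑ j ∈ I, v j := by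
  rw [← Finset.sum_neg_distrib]
  exact Finset.sum_congr rfl fun j hj => by simp [signFlip, hj]

theorem zI_mulVec (v : Fin m → ℝ) :
    zI M I *ᵥ v = M *ᵥ (signFlip I * v) + (∑ j ∈ I, v j) • 1 := by
  ext i
  simp only [mulVec, dotProduct, Pi.add_apply, Pi.smul_apply, Pi.one_apply, smul_eq_mul, mul_one]
  rw [show ∑ j ∈ I, v j = ∑ j, if j ∈ I then v j else 0 by simp, ← Finset.sum_add_distrib]
  refine Finset.sum_congr rfl fun j _ => ?_
  by_cases hj : j ∈ I <;> simp [zI, signFlip, hj]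
  ring

theorem zI_mulVec_signFlip_mul {l : Fin m → ℝ} (hMl : M *ᵥ l = 1) :
    zI M I *ᵥ (signFlip I * l) = (1 - ∑ j ∈ I, l j) • 1 := by
  rw [zI_mulVec, ← mul_assoc, signFlip_mul_self, one_mul, hMl, sum_signFlip_mul, sub_smul,
    one_smul, sub_eq_add_neg, neg_smul]

theorem zI_mulVec_injective (hM : Injective M.mulVec) {l : Fin m → ℝ} (hMl : M *ᵥ l = 1)
    (hI : ∑ j ∈ I, l j ≠ 1) : Injective (zI M I).mulVec := by
  rw [← coe_mulVecLin, injective_iff_map_eq_zero]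
  intro v hv
  rw [coe_mulVecLin, zI_mulVec, add_eq_zero_iff_eq_neg, ← neg_smul, ← hMl, ← mulVec_smul] at hv
  set t := ∑ j ∈ I, v j
  have hσv : signFlip I * v = -t • l := hM hv
  have ht : t = t * ∑ j ∈ I, l j := by
    calc t = -∑ j ∈ I, (signFlip I * v) j := by rw [sum_signFlip_mul, neg_neg]
      _ = t * ∑ j ∈ I, l j := by rw [hσv]; simp [Finset.mul_sum]
  have ht0 : t = 0 := by
    by_contra h
    exact hI (mul_left_cancel₀ h (by rw [mul_one, ← ht])).symm
  rw [← one_mul v, ← signFlip_mul_self I, mul_assoc, hσv, ht0, neg_zero, zero_smul, mul_zero]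

theorem zI_mulVec_signFlip_mul_eq_zero {l : Fin m → ℝ} (hMl : M *ᵥ l = 1)
    (hI : ∑ j ∈ I, l j = 1) : zI M I *ᵥ (signFlip I * l) = 0 := by
  rw [zI_mulVec_signFlip_mul M I hMl, hI, sub_self, zero_smul]

theorem signFlip_mul_ne_zero {l : Fin m → ℝ} (hl : ∀ j, l j ≠ 0) (hI : I.Nonempty) :
    signFlip I * l ≠ 0 := by
  obtain ⟨k, hk⟩ := hI
  intro h
  simpa [signFlip, hk, hl k] using congrFun h k

theorem zI_rank_eq_and_exists_nonzero_solution_iff (hrk : M.rank = m) {l : Fin m → ℝ}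
    (hMl : M *ᵥ l = 1) (hl : ∀ j, l j ≠ 0) :
    ((zI M I).rank = m ∧ ∃ μ : Fin m → ℝ, zI M I *ᵥ μ = 1 ∧ ∀ j, μ j ≠ 0) ↔
      ∑ j ∈ I, l j ≠ 1 := by
  have hfull (A : Matrix (Fin n) (Fin m) ℝ) : A.rank = m ↔ Injective A.mulVec := by
    rw [← rank_eq_card_iff_mulVec_injective, Fintype.card_fin]
  rw [hfull]
  constructor
  · rintro ⟨hinj, -⟩ hI
    have hne : I.Nonempty := Finset.nonempty_of_sum_ne_zero (by rw [hI]; exact one_ne_zero)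
    apply signFlip_mul_ne_zero I hl hne
    apply hinj
    rw [zI_mulVec_signFlip_mul_eq_zero M I hMl hI, mulVec_zero]
  · intro hI
    have hs : 1 - ∑ j ∈ I, l j ≠ 0 := sub_ne_zero.2 (Ne.symm hI)
    refine ⟨zI_mulVec_injective M I ((hfull M).1 hrk) hMl hI,
      (1 - ∑ j ∈ I, l j)⁻¹ • (signFlip I * l), ?_, ?_⟩
    · rw [mulVec_smul, zI_mulVec_signFlip_mul M I hMl, smul_smul, inv_mul_cancel₀ hs, one_smul]
    · intro j
      by_cases hj : j ∈ I <;> simp [signFlip, hj, hs, hl j]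

end

theorem stmt14_general (n m : ℕ)
    (M : Matrix (Fin n) (Fin m) ℝ)
    (hrk : M.rank = m) (l : Fin m → ℝ) (hMl : M.mulVec l = 1)
    (hlne : ∀ i, l i ≠ 0) :
    {I : Finset (Fin m) | (zI M I).rank = m ∧
        ∃ μ : Fin m → ℝ, (zI M I).mulVec μ = 1 ∧ ∀ i, μ i ≠ 0}.ncard =
      2 ^ m - (unifSets m l).ncard := by
  have hset : {I : Finset (Fin m) | (zI M I).rank = m ∧
      ∃ μ : Fin m → ℝ, (zI M I).mulVec μ = 1 ∧ ∀ i, μ i ≠ 0} = (unifSets m l)ᶜ :=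
    Set.ext fun I => zI_rank_eq_and_exists_nonzero_solution_iff M I hrk hMl hlne
  rw [hset, Set.ncard_compl, Nat.card_eq_fintype_card, Fintype.card_finset, Fintype.card_fin]

/-- If `M` is an `n × m` `(0,1)`-matrix of rank `m` whose unique solution `λ` of
`Mλ = 𝟙` has all coordinates nonzero, then the number of subsets `I ⊆ [m]` for which
`z_I(M)` has rank `m` and a solution with all coordinates nonzero equals
`2^m − |U(λ)|`. -/
theorem stmt14 (n m : ℕ)
    (M : Matrix (Fin n) (Fin m) ℝ) (h01 : ∀ i j, M i j = 0 ∨ M i j = 1)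
    (hrk : M.rank = m) (l : Fin m → ℝ) (hMl : M.mulVec l = 1)
    (hlne : ∀ i, l i ≠ 0) :
    {I : Finset (Fin m) | (zI M I).rank = m ∧
        ∃ μ : Fin m → ℝ, (zI M I).mulVec μ = 1 ∧ ∀ i, μ i ≠ 0}.ncard =
      2 ^ m - (unifSets m l).ncard :=
  stmt14_general n m M hrk l hMl hlne
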